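/- arXiv:1512.08120 — 2 statements merged into one kernel-verified Lean document; each statement's English description precedes it below -/
import Mathlib

section
/- Let X ∈ ℝ^{I₁×I₂×I₃} be a third-order tensor and G ∈ ℝ^{d₁×d₂×d₃} a tensor such that X = G ×₁ U ×₂ V ×₃ W, where U ∈ ℝ^{I₁×d₁}, V ∈ ℝ^{I₂×d₂}, W ∈ ℝ^{I₃×d₃} are column-orthonormal (UᵀU = I_{d₁}, VᵀV = I_{d₂}, WᵀW = I_{d₃}). Then for every 0 < p < ∞, the tensor Schatten p-norms satisfy ‖X‖_{S_p} = ‖G‖_{S_p}. -/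
open scoped BigOperators
open Matrix Kronecker Filter Topology

/-- A third-order real tensor of size `I₁ × I₂ × I₃`. -/
abbrev Tensor (I₁ I₂ I₃ : ℕ) : Type := Fin I₁ → Fin I₂ → Fin I₃ → ℝ

namespace Tensor

variable {I₁ I₂ I₃ J d₁ d₂ d₃ : ℕ}

/-- The 1-mode product `X ×₁ U`. -/
noncomputable def mode1 (X : Tensor I₁ I₂ I₃) (U : Matrix (Fin J) (Fin I₁) ℝ) : Tensor J I₂ I₃ :=
  fun j i₂ i₃ => ∑ i₁, X i₁ i₂ i₃ * U j i₁

/-- The 2-mode product `X ×₂ V`. -/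
noncomputable def mode2 (X : Tensor I₁ I₂ I₃) (V : Matrix (Fin J) (Fin I₂) ℝ) : Tensor I₁ J I₃ :=
  fun i₁ j i₃ => ∑ i₂, X i₁ i₂ i₃ * V j i₂

/-- The 3-mode product `X ×₃ W`. -/
noncomputable def mode3 (X : Tensor I₁ I₂ I₃) (W : Matrix (Fin J) (Fin I₃) ℝ) : Tensor I₁ I₂ J :=
  fun i₁ i₂ j => ∑ i₃, X i₁ i₂ i₃ * W j i₃

/-- `G ×₁ U ×₂ V ×₃ W`. -/
noncomputable def tucker (G : Tensor d₁ d₂ d₃) (U : Matrix (Fin I₁) (Fin d₁) ℝ)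
    (V : Matrix (Fin I₂) (Fin d₂) ℝ) (W : Matrix (Fin I₃) (Fin d₃) ℝ) : Tensor I₁ I₂ I₃ :=
  mode3 (mode2 (mode1 G U) V) W

/-- Mode-1 unfolding `X₍₁₎`; columns are indexed by pairs `(i₃, i₂)` (with `i₂` varying fastest,
matching `j = 1 + (i₂ - 1) + (i₃ - 1)·I₂`). -/
def unfold1 (X : Tensor I₁ I₂ I₃) : Matrix (Fin I₁) (Fin I₃ × Fin I₂) ℝ :=
  fun i₁ p => X i₁ p.2 p.1

/-- Mode-2 unfolding `X₍₂₎`; columns indexed by `(i₃, i₁)` with `i₁` fastest. -/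
def unfold2 (X : Tensor I₁ I₂ I₃) : Matrix (Fin I₂) (Fin I₃ × Fin I₁) ℝ :=
  fun i₂ p => X p.2 i₂ p.1

/-- Mode-3 unfolding `X₍₃₎`; columns indexed by `(i₂, i₁)` with `i₁` fastest. -/
def unfold3 (X : Tensor I₁ I₂ I₃) : Matrix (Fin I₃) (Fin I₂ × Fin I₁) ℝ :=
  fun i₃ p => X p.2 p.1 i₃

/-- Refolding of a mode-1 unfolded matrix back into a tensor. -/
def refold1 (M : Matrix (Fin d₁) (Fin d₃ × Fin d₂) ℝ) : Tensor d₁ d₂ d₃ :=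
  fun i₁ i₂ i₃ => M i₁ (i₃, i₂)

/-- Refolding of a mode-2 unfolded matrix back into a tensor. -/
def refold2 (M : Matrix (Fin d₂) (Fin d₃ × Fin d₁) ℝ) : Tensor d₁ d₂ d₃ :=
  fun i₁ i₂ i₃ => M i₂ (i₃, i₁)

/-- Refolding of a mode-3 unfolded matrix back into a tensor. -/
def refold3 (M : Matrix (Fin d₃) (Fin d₂ × Fin d₁) ℝ) : Tensor d₁ d₂ d₃ :=
  fun i₁ i₂ i₃ => M i₃ (i₂, i₁)

/-- Tensor inner product `⟨A, B⟩`. -/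
def tinner (A B : Tensor I₁ I₂ I₃) : ℝ := ∑ i₁, ∑ i₂, ∑ i₃, A i₁ i₂ i₃ * B i₁ i₂ i₃

/-- Squared Frobenius norm `‖X‖²_F`. -/
def frobSq (X : Tensor I₁ I₂ I₃) : ℝ := ∑ i₁, ∑ i₂, ∑ i₃, (X i₁ i₂ i₃) ^ 2

/-- Frobenius norm `‖X‖_F`. -/
noncomputable def frob (X : Tensor I₁ I₂ I₃) : ℝ := Real.sqrt (frobSq X)

/-- Hadamard (entrywise) product of tensors. -/
def hadamard (A B : Tensor I₁ I₂ I₃) : Tensor I₁ I₂ I₃ := fun i₁ i₂ i₃ => A i₁ i₂ i₃ * B i₁ i₂ i₃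

/-- `P_Ω(X)`: agrees with `X` on `Ω` and is zero elsewhere. -/
def proj (Ω : Set (Fin I₁ × Fin I₂ × Fin I₃)) [DecidablePred (· ∈ Ω)] (X : Tensor I₁ I₂ I₃) :
    Tensor I₁ I₂ I₃ := fun i₁ i₂ i₃ => if (i₁, i₂, i₃) ∈ Ω then X i₁ i₂ i₃ else 0

/-- `P_Ω^⊥(X) = X - P_Ω(X)`. -/
def projc (Ω : Set (Fin I₁ × Fin I₂ × Fin I₃)) [DecidablePred (· ∈ Ω)] (X : Tensor I₁ I₂ I₃) :
    Tensor I₁ I₂ I₃ := X - proj Ω X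

/-- The 0/1 indicator tensor of an index set `Ω`. -/
def indic (Ω : Set (Fin I₁ × Fin I₂ × Fin I₃)) [DecidablePred (· ∈ Ω)] : Tensor I₁ I₂ I₃ :=
  fun i₁ i₂ i₃ => if (i₁, i₂, i₃) ∈ Ω then 1 else 0

end Tensor

namespace MatrixAux

/-- The singular values of a real matrix `M`: square roots of the eigenvalues of `MᴴM`
(for real matrices `Mᴴ = Mᵀ`). -/
noncomputable def singularValues {m n : Type*} [Fintype m] [Fintype n] [DecidableEq n]
    (M : Matrix m n ℝ) : n → ℝ :=
  fun i => Real.sqrt ((Matrix.isHermitian_conjTranspose_mul_self M).eigenvalues i)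

/-- The Schatten `p`-norm of a real matrix, `(∑ᵢ σᵢᵖ)^(1/p)`. -/
noncomputable def schattenNorm (p : ℝ) {m n : Type*} [Fintype m] [Fintype n] [DecidableEq n]
    (M : Matrix m n ℝ) : ℝ :=
  (∑ i, singularValues M i ^ p) ^ (1 / p)

/-- The trace norm (nuclear norm) of a real matrix: the sum of its singular values. -/
noncomputable def traceNorm {m n : Type*} [Fintype m] [Fintype n] [DecidableEq n]
    (M : Matrix m n ℝ) : ℝ :=
  ∑ i, singularValues M i

/-- Squared Frobenius norm of a matrix. -/
def frobSq {m n : Type*} [Fintype m] [Fintype n] (M : Matrix m n ℝ) : ℝ := ∑ i, ∑ j, (M i j) ^ 2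

/-- Frobenius norm of a matrix. -/
noncomputable def frob {m n : Type*} [Fintype m] [Fintype n] (M : Matrix m n ℝ) : ℝ :=
  Real.sqrt (frobSq M)

/-- Frobenius (trace) inner product of matrices. -/
def minner {m n : Type*} [Fintype m] [Fintype n] (A B : Matrix m n ℝ) : ℝ :=
  ∑ i, ∑ j, A i j * B i j

end MatrixAux

/-- The Schatten `p`-norm of a third-order tensor: the average of the Schatten `p`-norms of its
three mode-`n` unfoldings. -/
noncomputable def tensorSchattenNorm (p : ℝ) {I₁ I₂ I₃ : ℕ} (X : Tensor I₁ I₂ I₃) : ℝ :=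
  (MatrixAux.schattenNorm p (Tensor.unfold1 X) + MatrixAux.schattenNorm p (Tensor.unfold2 X)
    + MatrixAux.schattenNorm p (Tensor.unfold3 X)) / 3

/-! Each unfolding of `G ×₁ U ×₂ V ×₃ W` has the form `Uₙ G₍ₙ₎ Qₙᵀ`, where `Qₙ` is a Kronecker
product of the two other factors and hence is column-orthonormal as well. A column-orthonormal
factor on the left does not change the Gram matrix `MᵀM`, hence not the singular values. A factor
on the right is moved to the left by transposing, which preserves the singular values because
`Xᵐ · χ(MᵀM) = Xⁿ · χ(MMᵀ)`: the two Gram matrices share their nonzero eigenvalues. -/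

open Polynomial in
theorem Matrix.IsHermitian.sum_eigenvalues_eq_of_X_pow_mul_charpoly_eq {𝕜 m n : Type*} [RCLike 𝕜]
    [Fintype m] [Fintype n] [DecidableEq m] [DecidableEq n] {S : Matrix m m 𝕜} {T : Matrix n n 𝕜}
    (hS : S.IsHermitian) (hT : T.IsHermitian) {k l : ℕ}
    (h : X ^ k * S.charpoly = X ^ l * T.charpoly) (f : ℝ → ℝ) (hf : f 0 = 0) :
    ∑ i, f (hS.eigenvalues i) = ∑ j, f (hT.eigenvalues j) := by
  have hroots := congrArg (fun p : 𝕜[X] => (p.roots.map (f ∘ RCLike.re)).sum) h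
  rw [roots_mul (mul_ne_zero (pow_ne_zero _ X_ne_zero) (charpoly_monic _).ne_zero),
    roots_mul (mul_ne_zero (pow_ne_zero _ X_ne_zero) (charpoly_monic _).ne_zero),
    roots_X_pow, roots_X_pow, hS.roots_charpoly_eq_eigenvalues,
    hT.roots_charpoly_eq_eigenvalues] at hroots
  simp only [Multiset.map_add, Multiset.sum_add, Multiset.map_nsmul, Multiset.sum_nsmul,
    Multiset.map_singleton, Multiset.sum_singleton, Multiset.map_map, Function.comp_apply,
    map_zero, hf, smul_zero, zero_add, RCLike.ofReal_re] at hroots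
  exact hroots

namespace MatrixAux

variable {m n : Type*} [Fintype m] [Fintype n]

theorem schattenNorm_eq_of_transpose_mul_self_eq {m' : Type*} [Fintype m'] [DecidableEq n]
    {A : Matrix m n ℝ} {B : Matrix m' n ℝ} (h : Aᵀ * A = Bᵀ * B) (p : ℝ) :
    schattenNorm p A = schattenNorm p B := by
  have hAB : Aᴴ * A = Bᴴ * B := by simpa only [conjTranspose_eq_transpose_of_trivial] using h
  unfold schattenNorm singularValues
  rw [(isHermitian_conjTranspose_mul_self A).eigenvalues_eq_eigenvalues_iff
    (isHermitian_conjTranspose_mul_self B) |>.mpr (congrArg charpoly hAB)]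

theorem schattenNorm_transpose [DecidableEq m] [DecidableEq n] (A : Matrix m n ℝ) {p : ℝ}
    (hp : p ≠ 0) : schattenNorm p Aᵀ = schattenNorm p A := by
  have hchar : Polynomial.X ^ Fintype.card n * (Aᵀᴴ * Aᵀ).charpoly
      = Polynomial.X ^ Fintype.card m * (Aᴴ * A).charpoly := by
    simpa only [conjTranspose_eq_transpose_of_trivial, transpose_transpose]
      using charpoly_mul_comm' A Aᵀ
  unfold schattenNorm singularValues
  rw [(isHermitian_conjTranspose_mul_self Aᵀ).sum_eigenvalues_eq_of_X_pow_mul_charpoly_eq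
    (isHermitian_conjTranspose_mul_self A) hchar (fun x => √x ^ p) (by simp [hp])]

theorem schattenNorm_mul_of_transpose_mul_self_eq_one {m' : Type*} [Fintype m']
    [DecidableEq m] [DecidableEq n] (U : Matrix m' m ℝ) (hU : Uᵀ * U = 1) (M : Matrix m n ℝ)
    (p : ℝ) :
    schattenNorm p (U * M) = schattenNorm p M :=
  schattenNorm_eq_of_transpose_mul_self_eq (by
    rw [transpose_mul, Matrix.mul_assoc, ← Matrix.mul_assoc Uᵀ, hU, Matrix.one_mul]) p

theorem schattenNorm_mul_mul_transpose_of_orthonormal {m' n' : Type*} [Fintype m'] [Fintype n']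
    [DecidableEq m] [DecidableEq n] [DecidableEq m'] [DecidableEq n']
    {U : Matrix m' m ℝ} {Q : Matrix n' n ℝ} (hU : Uᵀ * U = 1) (hQ : Qᵀ * Q = 1)
    (M : Matrix m n ℝ) {p : ℝ} (hp : p ≠ 0) :
    schattenNorm p (U * M * Qᵀ) = schattenNorm p M := by
  rw [← schattenNorm_transpose _ hp, transpose_mul, transpose_transpose,
    schattenNorm_mul_of_transpose_mul_self_eq_one Q hQ, schattenNorm_transpose _ hp,
    schattenNorm_mul_of_transpose_mul_self_eq_one U hU]

end MatrixAux

theorem Matrix.kronecker_transpose_mul_self_eq_one {R l m n p : Type*} [CommSemiring R]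
    [Fintype l] [Fintype n] [DecidableEq m] [DecidableEq p]
    {A : Matrix l m R} {B : Matrix n p R} (hA : Aᵀ * A = 1) (hB : Bᵀ * B = 1) :
    (A ⊗ₖ B)ᵀ * (A ⊗ₖ B) = 1 := by
  rw [← kroneckerMap_transpose, ← mul_kronecker_mul, hA, hB, one_kronecker_one]

namespace Tensor

variable {I₁ I₂ I₃ d₁ d₂ d₃ : ℕ} (G : Tensor d₁ d₂ d₃) (U : Matrix (Fin I₁) (Fin d₁) ℝ)
  (V : Matrix (Fin I₂) (Fin d₂) ℝ) (W : Matrix (Fin I₃) (Fin d₃) ℝ)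

theorem unfold1_tucker : unfold1 (tucker G U V W) = U * unfold1 G * (W ⊗ₖ V)ᵀ := by
  ext i₁ p
  simp only [unfold1, tucker, mode1, mode2, mode3, mul_apply, transpose_apply, kroneckerMap_apply,
    Fintype.sum_prod_type, Finset.sum_mul]
  refine Finset.sum_congr rfl fun a₃ _ => Finset.sum_congr rfl fun a₂ _ =>
    Finset.sum_congr rfl fun a₁ _ => ?_
  ring

theorem unfold2_tucker : unfold2 (tucker G U V W) = V * unfold2 G * (W ⊗ₖ U)ᵀ := by
  ext i₂ p
  simp only [unfold2, tucker, mode1, mode2, mode3, mul_apply, transpose_apply, kroneckerMap_apply,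
    Fintype.sum_prod_type, Finset.sum_mul]
  refine Finset.sum_congr rfl fun a₃ _ => ?_
  rw [Finset.sum_comm]
  refine Finset.sum_congr rfl fun a₂ _ => Finset.sum_congr rfl fun a₁ _ => ?_
  ring

theorem unfold3_tucker : unfold3 (tucker G U V W) = W * unfold3 G * (V ⊗ₖ U)ᵀ := by
  ext i₃ p
  simp only [unfold3, tucker, mode1, mode2, mode3, mul_apply, transpose_apply, kroneckerMap_apply,
    Fintype.sum_prod_type, Finset.sum_mul]
  conv_lhs => rw [Finset.sum_comm]
  refine Finset.sum_congr rfl fun a₃ _ => ?_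
  rw [Finset.sum_comm]
  refine Finset.sum_congr rfl fun a₂ _ => Finset.sum_congr rfl fun a₁ _ => ?_
  ring

end Tensor

/-- If `X = G ×₁ U ×₂ V ×₃ W` with column-orthonormal `U, V, W`, then for every
`0 < p < ∞` the tensor Schatten `p`-norms of `X` and of its core tensor `G` coincide. -/
theorem schattenNorm_tensor_tucker_eq {I₁ I₂ I₃ d₁ d₂ d₃ : ℕ}
    (X : Tensor I₁ I₂ I₃) (G : Tensor d₁ d₂ d₃)
    (U : Matrix (Fin I₁) (Fin d₁) ℝ) (V : Matrix (Fin I₂) (Fin d₂) ℝ)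
    (W : Matrix (Fin I₃) (Fin d₃) ℝ)
    (hX : X = Tensor.tucker G U V W)
    (hU : Uᵀ * U = 1) (hV : Vᵀ * V = 1) (hW : Wᵀ * W = 1) :
    ∀ p : ℝ, 0 < p → tensorSchattenNorm p X = tensorSchattenNorm p G := by
  intro p hp
  subst hX
  unfold tensorSchattenNorm
  rw [Tensor.unfold1_tucker, Tensor.unfold2_tucker, Tensor.unfold3_tucker,
    MatrixAux.schattenNorm_mul_mul_transpose_of_orthonormal hU
      (kronecker_transpose_mul_self_eq_one hW hV) _ hp.ne',
    MatrixAux.schattenNorm_mul_mul_transpose_of_orthonormal hV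
      (kronecker_transpose_mul_self_eq_one hW hU) _ hp.ne',
    MatrixAux.schattenNorm_mul_mul_transpose_of_orthonormal hW
      (kronecker_transpose_mul_self_eq_one hV hU) _ hp.ne']
end

section
/- Fix ρ > 0, a tensor T ∈ ℝ^{I₁×I₂×I₃}, and matrices C_n ∈ ℝ^{d_n × ∏_{j≠n} d_j} for n = 1,2,3, and set B = Σ_{n=1}^{3} refold_n(C_n). For column-orthonormal U, V, W, let C = T ×₁ Uᵀ ×₂ Vᵀ ×₃ Wᵀ, and let f(U,V,W) = min over G ∈ ℝ^{d₁×d₂×d₃} of [ Σ_{n=1}^{3} (ρ/2)‖G_{(n)} − C_n‖²_F + (1/2)‖T − G ×₁ U ×₂ V ×₃ W‖²_F ]. Then f(U,V,W) = (ρ/2) Σ_{n=1}^{3} ‖C_n‖²_F + (1/2)‖T‖²_F − (1/(2(3ρ+1))) ‖ρ B + C‖²_F, with the minimizing G equal to (ρ B + C)/(3ρ+1); hence minimizing f over column-orthonormal (U,V,W) is equivalent to maximizing g(U,V,W) = ‖C + ρ B‖²_F over column-orthonormal (U,V,W). -/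
open scoped BigOperators
open Matrix Kronecker Filter Topology

/-! Unfoldings are isometries, and a mode-`n` product acts on the mode-`n` unfolding as left
multiplication; so for column-orthonormal `U, V, W` the Tucker map
`G ↦ G ×₁ U ×₂ V ×₃ W` is an isometry with adjoint `T ↦ T ×₁ Uᵀ ×₂ Vᵀ ×₃ Wᵀ`. Hence the
objective equals `(ρ/2) ∑ₙ ‖G − refoldₙ Cₙ‖² + (1/2)(‖T‖² − 2⟨G, C⟩ + ‖G‖²)`, a quadratic in `G`
with leading coefficient `(3ρ + 1)/2`. Completing the square gives
`(3ρ + 1)/2 · ‖G − (ρB + C)/(3ρ + 1)‖²` plus the claimed value, and that value is a decreasing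
function of `‖ρB + C‖²`. -/

open scoped RealInnerProductSpace
open Finset

section CompleteSquare

variable {E ι : Type*} [NormedAddCommGroup E] [InnerProductSpace ℝ E]

lemma sum_norm_sub_sq (s : Finset ι) (b : ι → E) (x : E) :
    ∑ i ∈ s, ‖x - b i‖ ^ 2 = #s * ‖x‖ ^ 2 - 2 * ⟪x, ∑ i ∈ s, b i⟫ + ∑ i ∈ s, ‖b i‖ ^ 2 := by
  simp only [norm_sub_sq_real, sum_add_distrib, sum_sub_distrib, inner_sum, ← mul_sum,
    sum_const, nsmul_eq_mul]

lemma sum_norm_sub_sq_complete_square {ρ : ℝ} (s : Finset ι) (b : ι → E) (c x : E)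
    (hk : #s * ρ + 1 ≠ 0) :
    ρ / 2 * ∑ i ∈ s, ‖x - b i‖ ^ 2 + (1 / 2 * ‖x‖ ^ 2 - ⟪x, c⟫)
      = (#s * ρ + 1) / 2 * ‖x - (1 / (#s * ρ + 1)) • (ρ • ∑ i ∈ s, b i + c)‖ ^ 2
        + (ρ / 2 * ∑ i ∈ s, ‖b i‖ ^ 2
          - 1 / (2 * (#s * ρ + 1)) * ‖ρ • ∑ i ∈ s, b i + c‖ ^ 2) := by
  set k : ℝ := #s * ρ + 1 with hk_def
  rw [sum_norm_sub_sq, norm_sub_sq_real, norm_smul, inner_smul_right, inner_add_right,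
    inner_smul_right, mul_pow, Real.norm_eq_abs, sq_abs]
  field_simp
  rw [hk_def]
  ring

end CompleteSquare

namespace MatrixAux

variable {m n k : Type*} [Fintype m] [Fintype n] [Fintype k]

lemma minner_self (A : Matrix m n ℝ) : minner A A = frobSq A := by
  simp [minner, frobSq, sq]

lemma minner_eq_trace (A B : Matrix m n ℝ) : minner A B = (Aᵀ * B).trace := by
  simp only [minner, Matrix.trace, Matrix.diag, Matrix.mul_apply, Matrix.transpose_apply]
  exact sum_comm

lemma minner_mul_left (U : Matrix k m ℝ) (A : Matrix m n ℝ) (B : Matrix k n ℝ) :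
    minner (U * A) B = minner A (Uᵀ * B) := by
  rw [minner_eq_trace, minner_eq_trace, Matrix.transpose_mul, Matrix.mul_assoc]

lemma frobSq_mul_of_transpose_mul_eq_one [DecidableEq m] {U : Matrix k m ℝ} (hU : Uᵀ * U = 1)
    (A : Matrix m n ℝ) : frobSq (U * A) = frobSq A := by
  rw [← minner_self, minner_mul_left, ← Matrix.mul_assoc, hU, Matrix.one_mul, minner_self]

end MatrixAux

namespace Tensor

variable {I₁ I₂ I₃ J K d₁ d₂ d₃ : ℕ}

lemma tinner_self (X : Tensor I₁ I₂ I₃) : tinner X X = frobSq X := by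
  simp [tinner, frobSq, sq]

def toEuclidean : Tensor I₁ I₂ I₃ →ₗ[ℝ] EuclideanSpace ℝ (Fin I₁ × Fin I₂ × Fin I₃) where
  toFun X := WithLp.toLp 2 fun i => X i.1 i.2.1 i.2.2
  map_add' _ _ := rfl
  map_smul' _ _ := rfl

lemma toEuclidean_apply (X : Tensor I₁ I₂ I₃) (i : Fin I₁ × Fin I₂ × Fin I₃) :
    toEuclidean X i = X i.1 i.2.1 i.2.2 := rfl

lemma tinner_eq_inner (X Y : Tensor I₁ I₂ I₃) : tinner X Y = ⟪toEuclidean X, toEuclidean Y⟫ := by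
  simp [tinner, toEuclidean_apply, PiLp.inner_apply, Fintype.sum_prod_type, mul_comm]

lemma frobSq_eq_norm_sq (X : Tensor I₁ I₂ I₃) : frobSq X = ‖toEuclidean X‖ ^ 2 := by
  rw [← tinner_self, tinner_eq_inner, real_inner_self_eq_norm_sq]

lemma minner_unfold1 (X Y : Tensor I₁ I₂ I₃) :
    MatrixAux.minner (unfold1 X) (unfold1 Y) = tinner X Y := by
  simp only [MatrixAux.minner, tinner, unfold1, Fintype.sum_prod_type]
  exact sum_congr rfl fun _ _ => sum_comm

lemma minner_unfold2 (X Y : Tensor I₁ I₂ I₃) :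
    MatrixAux.minner (unfold2 X) (unfold2 Y) = tinner X Y := by
  simp only [MatrixAux.minner, tinner, unfold2, Fintype.sum_prod_type]
  exact (sum_congr rfl fun _ _ => sum_comm).trans sum_comm

lemma minner_unfold3 (X Y : Tensor I₁ I₂ I₃) :
    MatrixAux.minner (unfold3 X) (unfold3 Y) = tinner X Y := by
  simp only [MatrixAux.minner, tinner, unfold3, Fintype.sum_prod_type]
  exact sum_comm.trans ((sum_congr rfl fun _ _ => sum_comm).trans sum_comm)

lemma frobSq_unfold1 (X : Tensor I₁ I₂ I₃) : MatrixAux.frobSq (unfold1 X) = frobSq X := by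
  rw [← MatrixAux.minner_self, minner_unfold1, tinner_self]

lemma frobSq_unfold2 (X : Tensor I₁ I₂ I₃) : MatrixAux.frobSq (unfold2 X) = frobSq X := by
  rw [← MatrixAux.minner_self, minner_unfold2, tinner_self]

lemma frobSq_unfold3 (X : Tensor I₁ I₂ I₃) : MatrixAux.frobSq (unfold3 X) = frobSq X := by
  rw [← MatrixAux.minner_self, minner_unfold3, tinner_self]

lemma frobSq_unfold1_sub (X : Tensor d₁ d₂ d₃) (C : Matrix (Fin d₁) (Fin d₃ × Fin d₂) ℝ) :
    MatrixAux.frobSq (unfold1 X - C) = frobSq (X - refold1 C) :=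
  frobSq_unfold1 (X - refold1 C)

lemma frobSq_unfold2_sub (X : Tensor d₁ d₂ d₃) (C : Matrix (Fin d₂) (Fin d₃ × Fin d₁) ℝ) :
    MatrixAux.frobSq (unfold2 X - C) = frobSq (X - refold2 C) :=
  frobSq_unfold2 (X - refold2 C)

lemma frobSq_unfold3_sub (X : Tensor d₁ d₂ d₃) (C : Matrix (Fin d₃) (Fin d₂ × Fin d₁) ℝ) :
    MatrixAux.frobSq (unfold3 X - C) = frobSq (X - refold3 C) :=
  frobSq_unfold3 (X - refold3 C)

lemma frobSq_refold1 (C : Matrix (Fin d₁) (Fin d₃ × Fin d₂) ℝ) :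
    frobSq (refold1 C) = MatrixAux.frobSq C :=
  (frobSq_unfold1 (refold1 C)).symm

lemma frobSq_refold2 (C : Matrix (Fin d₂) (Fin d₃ × Fin d₁) ℝ) :
    frobSq (refold2 C) = MatrixAux.frobSq C :=
  (frobSq_unfold2 (refold2 C)).symm

lemma frobSq_refold3 (C : Matrix (Fin d₃) (Fin d₂ × Fin d₁) ℝ) :
    frobSq (refold3 C) = MatrixAux.frobSq C :=
  (frobSq_unfold3 (refold3 C)).symm

lemma unfold1_mode1 (X : Tensor I₁ I₂ I₃) (U : Matrix (Fin J) (Fin I₁) ℝ) :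
    unfold1 (mode1 X U) = U * unfold1 X := by
  ext i p
  simp [unfold1, mode1, Matrix.mul_apply, mul_comm]

lemma unfold2_mode2 (X : Tensor I₁ I₂ I₃) (V : Matrix (Fin J) (Fin I₂) ℝ) :
    unfold2 (mode2 X V) = V * unfold2 X := by
  ext i p
  simp [unfold2, mode2, Matrix.mul_apply, mul_comm]

lemma unfold3_mode3 (X : Tensor I₁ I₂ I₃) (W : Matrix (Fin J) (Fin I₃) ℝ) :
    unfold3 (mode3 X W) = W * unfold3 X := by
  ext i p
  simp [unfold3, mode3, Matrix.mul_apply, mul_comm]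

lemma tinner_mode1 (X : Tensor I₁ I₂ I₃) (U : Matrix (Fin J) (Fin I₁) ℝ) (Y : Tensor J I₂ I₃) :
    tinner (mode1 X U) Y = tinner X (mode1 Y Uᵀ) := by
  rw [← minner_unfold1, ← minner_unfold1, unfold1_mode1, unfold1_mode1,
    MatrixAux.minner_mul_left]

lemma tinner_mode2 (X : Tensor I₁ I₂ I₃) (V : Matrix (Fin J) (Fin I₂) ℝ) (Y : Tensor I₁ J I₃) :
    tinner (mode2 X V) Y = tinner X (mode2 Y Vᵀ) := by
  rw [← minner_unfold2, ← minner_unfold2, unfold2_mode2, unfold2_mode2,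
    MatrixAux.minner_mul_left]

lemma tinner_mode3 (X : Tensor I₁ I₂ I₃) (W : Matrix (Fin J) (Fin I₃) ℝ) (Y : Tensor I₁ I₂ J) :
    tinner (mode3 X W) Y = tinner X (mode3 Y Wᵀ) := by
  rw [← minner_unfold3, ← minner_unfold3, unfold3_mode3, unfold3_mode3,
    MatrixAux.minner_mul_left]

lemma frobSq_mode1 (X : Tensor I₁ I₂ I₃) {U : Matrix (Fin J) (Fin I₁) ℝ} (hU : Uᵀ * U = 1) :
    frobSq (mode1 X U) = frobSq X := by
  rw [← frobSq_unfold1, unfold1_mode1, MatrixAux.frobSq_mul_of_transpose_mul_eq_one hU,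
    frobSq_unfold1]

lemma frobSq_mode2 (X : Tensor I₁ I₂ I₃) {V : Matrix (Fin J) (Fin I₂) ℝ} (hV : Vᵀ * V = 1) :
    frobSq (mode2 X V) = frobSq X := by
  rw [← frobSq_unfold2, unfold2_mode2, MatrixAux.frobSq_mul_of_transpose_mul_eq_one hV,
    frobSq_unfold2]

lemma frobSq_mode3 (X : Tensor I₁ I₂ I₃) {W : Matrix (Fin J) (Fin I₃) ℝ} (hW : Wᵀ * W = 1) :
    frobSq (mode3 X W) = frobSq X := by
  rw [← frobSq_unfold3, unfold3_mode3, MatrixAux.frobSq_mul_of_transpose_mul_eq_one hW,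
    frobSq_unfold3]

lemma mode2_mode1_comm (X : Tensor I₁ I₂ I₃) (U : Matrix (Fin J) (Fin I₁) ℝ)
    (V : Matrix (Fin K) (Fin I₂) ℝ) : mode2 (mode1 X U) V = mode1 (mode2 X V) U := by
  funext i j k
  simp only [mode1, mode2, sum_mul]
  rw [sum_comm]
  exact sum_congr rfl fun _ _ => sum_congr rfl fun _ _ => by ring

lemma mode3_mode1_comm (X : Tensor I₁ I₂ I₃) (U : Matrix (Fin J) (Fin I₁) ℝ)
    (W : Matrix (Fin K) (Fin I₃) ℝ) : mode3 (mode1 X U) W = mode1 (mode3 X W) U := by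
  funext i j k
  simp only [mode1, mode3, sum_mul]
  rw [sum_comm]
  exact sum_congr rfl fun _ _ => sum_congr rfl fun _ _ => by ring

lemma mode3_mode2_comm (X : Tensor I₁ I₂ I₃) (V : Matrix (Fin J) (Fin I₂) ℝ)
    (W : Matrix (Fin K) (Fin I₃) ℝ) : mode3 (mode2 X V) W = mode2 (mode3 X W) V := by
  funext i j k
  simp only [mode2, mode3, sum_mul]
  rw [sum_comm]
  exact sum_congr rfl fun _ _ => sum_congr rfl fun _ _ => by ring

lemma tinner_tucker (G : Tensor d₁ d₂ d₃) (U : Matrix (Fin I₁) (Fin d₁) ℝ)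
    (V : Matrix (Fin I₂) (Fin d₂) ℝ) (W : Matrix (Fin I₃) (Fin d₃) ℝ) (T : Tensor I₁ I₂ I₃) :
    tinner (tucker G U V W) T = tinner G (tucker T Uᵀ Vᵀ Wᵀ) := by
  rw [tucker, tinner_mode3, tinner_mode2, tinner_mode1, tucker, ← mode2_mode1_comm,
    ← mode3_mode1_comm, ← mode3_mode2_comm]

section Orthonormal

variable {U : Matrix (Fin I₁) (Fin d₁) ℝ} {V : Matrix (Fin I₂) (Fin d₂) ℝ}
  {W : Matrix (Fin I₃) (Fin d₃) ℝ}

lemma frobSq_tucker (G : Tensor d₁ d₂ d₃) (hU : Uᵀ * U = 1) (hV : Vᵀ * V = 1)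
    (hW : Wᵀ * W = 1) : frobSq (tucker G U V W) = frobSq G := by
  rw [tucker, frobSq_mode3 _ hW, frobSq_mode2 _ hV, frobSq_mode1 _ hU]

lemma frobSq_sub_tucker (T : Tensor I₁ I₂ I₃) (G : Tensor d₁ d₂ d₃) (hU : Uᵀ * U = 1)
    (hV : Vᵀ * V = 1) (hW : Wᵀ * W = 1) :
    frobSq (T - tucker G U V W) = frobSq T - 2 * tinner G (tucker T Uᵀ Vᵀ Wᵀ) + frobSq G := by
  rw [← frobSq_tucker G hU hV hW, ← tinner_tucker, frobSq_eq_norm_sq, frobSq_eq_norm_sq,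
    frobSq_eq_norm_sq, tinner_eq_inner, map_sub, norm_sub_sq_real, real_inner_comm]

end Orthonormal

noncomputable def coreObjective (ρ : ℝ) (T : Tensor I₁ I₂ I₃)
    (C₁ : Matrix (Fin d₁) (Fin d₃ × Fin d₂) ℝ) (C₂ : Matrix (Fin d₂) (Fin d₃ × Fin d₁) ℝ)
    (C₃ : Matrix (Fin d₃) (Fin d₂ × Fin d₁) ℝ) (G : Tensor d₁ d₂ d₃)
    (U : Matrix (Fin I₁) (Fin d₁) ℝ) (V : Matrix (Fin I₂) (Fin d₂) ℝ)
    (W : Matrix (Fin I₃) (Fin d₃) ℝ) : ℝ :=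
  ρ / 2 * (MatrixAux.frobSq (unfold1 G - C₁) + MatrixAux.frobSq (unfold2 G - C₂)
      + MatrixAux.frobSq (unfold3 G - C₃))
    + 1 / 2 * frobSq (T - tucker G U V W)

def refoldSum (C₁ : Matrix (Fin d₁) (Fin d₃ × Fin d₂) ℝ)
    (C₂ : Matrix (Fin d₂) (Fin d₃ × Fin d₁) ℝ) (C₃ : Matrix (Fin d₃) (Fin d₂ × Fin d₁) ℝ) :
    Tensor d₁ d₂ d₃ :=
  refold1 C₁ + refold2 C₂ + refold3 C₃

noncomputable def optimalCore (ρ : ℝ) (T : Tensor I₁ I₂ I₃)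
    (C₁ : Matrix (Fin d₁) (Fin d₃ × Fin d₂) ℝ) (C₂ : Matrix (Fin d₂) (Fin d₃ × Fin d₁) ℝ)
    (C₃ : Matrix (Fin d₃) (Fin d₂ × Fin d₁) ℝ) (U : Matrix (Fin I₁) (Fin d₁) ℝ)
    (V : Matrix (Fin I₂) (Fin d₂) ℝ) (W : Matrix (Fin I₃) (Fin d₃) ℝ) : Tensor d₁ d₂ d₃ :=
  (1 / (3 * ρ + 1)) • (ρ • refoldSum C₁ C₂ C₃ + tucker T Uᵀ Vᵀ Wᵀ)

noncomputable def optimalValue (ρ : ℝ) (T : Tensor I₁ I₂ I₃)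
    (C₁ : Matrix (Fin d₁) (Fin d₃ × Fin d₂) ℝ) (C₂ : Matrix (Fin d₂) (Fin d₃ × Fin d₁) ℝ)
    (C₃ : Matrix (Fin d₃) (Fin d₂ × Fin d₁) ℝ) (U : Matrix (Fin I₁) (Fin d₁) ℝ)
    (V : Matrix (Fin I₂) (Fin d₂) ℝ) (W : Matrix (Fin I₃) (Fin d₃) ℝ) : ℝ :=
  ρ / 2 * (MatrixAux.frobSq C₁ + MatrixAux.frobSq C₂ + MatrixAux.frobSq C₃)
    + 1 / 2 * frobSq T
    - 1 / (2 * (3 * ρ + 1)) * frobSq (ρ • refoldSum C₁ C₂ C₃ + tucker T Uᵀ Vᵀ Wᵀ)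

section CoreProblem

variable {ρ : ℝ} (T : Tensor I₁ I₂ I₃) (C₁ : Matrix (Fin d₁) (Fin d₃ × Fin d₂) ℝ)
  (C₂ : Matrix (Fin d₂) (Fin d₃ × Fin d₁) ℝ) (C₃ : Matrix (Fin d₃) (Fin d₂ × Fin d₁) ℝ)
  {U : Matrix (Fin I₁) (Fin d₁) ℝ} {V : Matrix (Fin I₂) (Fin d₂) ℝ}
  {W : Matrix (Fin I₃) (Fin d₃) ℝ}

lemma coreObjective_eq (hk : 3 * ρ + 1 ≠ 0) (hU : Uᵀ * U = 1) (hV : Vᵀ * V = 1)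
    (hW : Wᵀ * W = 1) (G : Tensor d₁ d₂ d₃) :
    coreObjective ρ T C₁ C₂ C₃ G U V W
      = (3 * ρ + 1) / 2 * frobSq (G - optimalCore ρ T C₁ C₂ C₃ U V W)
        + optimalValue ρ T C₁ C₂ C₃ U V W := by
  have h := sum_norm_sub_sq_complete_square univ
    ![toEuclidean (refold1 C₁), toEuclidean (refold2 C₂), toEuclidean (refold3 C₃)]
    (toEuclidean (tucker T Uᵀ Vᵀ Wᵀ)) (toEuclidean G) (ρ := ρ) (by simpa using hk)
  simp only [Fin.sum_univ_three, Matrix.cons_val_zero, Matrix.cons_val_one, Matrix.cons_val,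
    card_univ, Fintype.card_fin] at h
  rw [coreObjective, optimalValue, frobSq_sub_tucker T G hU hV hW, frobSq_unfold1_sub,
    frobSq_unfold2_sub, frobSq_unfold3_sub, ← frobSq_refold1, ← frobSq_refold2, ← frobSq_refold3]
  simp only [optimalCore, refoldSum, frobSq_eq_norm_sq, tinner_eq_inner, map_sub, map_add,
    map_smul]
  linarith

lemma coreObjective_optimalCore (hk : 3 * ρ + 1 ≠ 0) (hU : Uᵀ * U = 1) (hV : Vᵀ * V = 1)
    (hW : Wᵀ * W = 1) :
    coreObjective ρ T C₁ C₂ C₃ (optimalCore ρ T C₁ C₂ C₃ U V W) U V W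
      = optimalValue ρ T C₁ C₂ C₃ U V W := by
  rw [coreObjective_eq T C₁ C₂ C₃ hk hU hV hW, sub_self, frobSq_eq_norm_sq, map_zero, norm_zero]
  ring

lemma coreObjective_optimalCore_le (hk : 0 < 3 * ρ + 1) (hU : Uᵀ * U = 1) (hV : Vᵀ * V = 1)
    (hW : Wᵀ * W = 1) (G : Tensor d₁ d₂ d₃) :
    coreObjective ρ T C₁ C₂ C₃ (optimalCore ρ T C₁ C₂ C₃ U V W) U V W
      ≤ coreObjective ρ T C₁ C₂ C₃ G U V W := by
  rw [coreObjective_optimalCore T C₁ C₂ C₃ hk.ne' hU hV hW,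
    coreObjective_eq T C₁ C₂ C₃ hk.ne' hU hV hW, frobSq_eq_norm_sq]
  exact le_add_of_nonneg_left (by positivity)

lemma optimalValue_le_iff (hk : 0 < 3 * ρ + 1) (U' : Matrix (Fin I₁) (Fin d₁) ℝ)
    (V' : Matrix (Fin I₂) (Fin d₂) ℝ) (W' : Matrix (Fin I₃) (Fin d₃) ℝ) :
    optimalValue ρ T C₁ C₂ C₃ U V W ≤ optimalValue ρ T C₁ C₂ C₃ U' V' W'
      ↔ frobSq (tucker T U'ᵀ V'ᵀ W'ᵀ + ρ • refoldSum C₁ C₂ C₃)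
        ≤ frobSq (tucker T Uᵀ Vᵀ Wᵀ + ρ • refoldSum C₁ C₂ C₃) := by
  rw [optimalValue, optimalValue, sub_le_sub_iff_left, mul_le_mul_iff_right₀ (by positivity),
    add_comm (tucker T Uᵀ Vᵀ Wᵀ), add_comm (tucker T U'ᵀ V'ᵀ W'ᵀ)]

end CoreProblem

end Tensor

/-- With `C = T ×₁ Uᵀ ×₂ Vᵀ ×₃ Wᵀ` and `B = ∑ₙ refoldₙ(Cₙ)`, the minimum over
`G` of `∑ₙ (ρ/2)‖G₍ₙ₎ − Cₙ‖²_F + (1/2)‖T − G ×₁ U ×₂ V ×₃ W‖²_F` equals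
`(ρ/2)∑ₙ‖Cₙ‖²_F + (1/2)‖T‖²_F − (1/(2(3ρ+1)))‖ρB + C‖²_F`, attained at
`G = (ρB + C)/(3ρ+1)`; hence minimizing over column-orthonormal `(U,V,W)` is equivalent to
maximizing `g(U,V,W) = ‖C + ρB‖²_F`. -/
theorem min_core_value_eq' {I₁ I₂ I₃ d₁ d₂ d₃ : ℕ} (ρ : ℝ) (hρ : 0 < ρ)
    (T : Tensor I₁ I₂ I₃)
    (C₁ : Matrix (Fin d₁) (Fin d₃ × Fin d₂) ℝ)
    (C₂ : Matrix (Fin d₂) (Fin d₃ × Fin d₁) ℝ)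
    (C₃ : Matrix (Fin d₃) (Fin d₂ × Fin d₁) ℝ) :
    let obj : Tensor d₁ d₂ d₃ → Matrix (Fin I₁) (Fin d₁) ℝ → Matrix (Fin I₂) (Fin d₂) ℝ →
        Matrix (Fin I₃) (Fin d₃) ℝ → ℝ := fun G U V W =>
      ρ / 2 * (MatrixAux.frobSq (Tensor.unfold1 G - C₁)
          + MatrixAux.frobSq (Tensor.unfold2 G - C₂)
          + MatrixAux.frobSq (Tensor.unfold3 G - C₃))
        + 1 / 2 * Tensor.frobSq (T - Tensor.tucker G U V W)
    let B : Tensor d₁ d₂ d₃ := Tensor.refold1 C₁ + Tensor.refold2 C₂ + Tensor.refold3 C₃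
    let C : Matrix (Fin I₁) (Fin d₁) ℝ → Matrix (Fin I₂) (Fin d₂) ℝ →
        Matrix (Fin I₃) (Fin d₃) ℝ → Tensor d₁ d₂ d₃ := fun U V W => Tensor.tucker T Uᵀ Vᵀ Wᵀ
    let Gstar : Matrix (Fin I₁) (Fin d₁) ℝ → Matrix (Fin I₂) (Fin d₂) ℝ →
        Matrix (Fin I₃) (Fin d₃) ℝ → Tensor d₁ d₂ d₃ := fun U V W =>
      (1 / (3 * ρ + 1)) • (ρ • B + C U V W)
    let g : Matrix (Fin I₁) (Fin d₁) ℝ → Matrix (Fin I₂) (Fin d₂) ℝ →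
        Matrix (Fin I₃) (Fin d₃) ℝ → ℝ := fun U V W => Tensor.frobSq (C U V W + ρ • B)
    ∀ (U : Matrix (Fin I₁) (Fin d₁) ℝ) (V : Matrix (Fin I₂) (Fin d₂) ℝ)
      (W : Matrix (Fin I₃) (Fin d₃) ℝ), Uᵀ * U = 1 → Vᵀ * V = 1 → Wᵀ * W = 1 →
      (∀ G, obj (Gstar U V W) U V W ≤ obj G U V W) ∧
      obj (Gstar U V W) U V W
        = ρ / 2 * (MatrixAux.frobSq C₁ + MatrixAux.frobSq C₂ + MatrixAux.frobSq C₃)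
          + 1 / 2 * Tensor.frobSq T - 1 / (2 * (3 * ρ + 1)) * Tensor.frobSq (ρ • B + C U V W) ∧
      ∀ (U' : Matrix (Fin I₁) (Fin d₁) ℝ) (V' : Matrix (Fin I₂) (Fin d₂) ℝ)
        (W' : Matrix (Fin I₃) (Fin d₃) ℝ), U'ᵀ * U' = 1 → V'ᵀ * V' = 1 → W'ᵀ * W' = 1 →
        (obj (Gstar U V W) U V W ≤ obj (Gstar U' V' W') U' V' W' ↔ g U' V' W' ≤ g U V W) := by
  intro obj B C Gstar g U V W hU hV hW
  have hk : 0 < 3 * ρ + 1 := by positivity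
  have value : obj (Gstar U V W) U V W = Tensor.optimalValue ρ T C₁ C₂ C₃ U V W :=
    Tensor.coreObjective_optimalCore T C₁ C₂ C₃ hk.ne' hU hV hW
  refine ⟨Tensor.coreObjective_optimalCore_le T C₁ C₂ C₃ hk hU hV hW, value,
    fun U' V' W' hU' hV' hW' => ?_⟩
  have value' : obj (Gstar U' V' W') U' V' W' = Tensor.optimalValue ρ T C₁ C₂ C₃ U' V' W' :=
    Tensor.coreObjective_optimalCore T C₁ C₂ C₃ hk.ne' hU' hV' hW'
  rw [value, value']
  exact Tensor.optimalValue_le_iff T C₁ C₂ C₃ hk U' V' W'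
end
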